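/- Let s : ℕ³ → ℕ be an injection with range ⊆ ℕ ∖ {0,1,2,3}, and define t : ℕ³ → ℕ by t(0,0,0) = t(1,2,0) = 3 and t = s otherwise. Let ℂ = ⟨ℕ; t⟩. Suppose a term operation r of ℂ and tuples of generators of M(1,1) produce a square with entries (a, a; b, d) where b ≠ d (i.e. the two entries of one face are equal while the two entries of the opposite face differ). Then the term tree of r contains an occurrence of t applied to three subterms none of which forces the critical inputs to coincide — in particular, r has a subterm t(u,v,w) whose arguments can take the values (0,0,0) and (1,2,0) independently; equivalently, r is not expressible as a composition of binary polynomials of ℂ in only two of its variables achieving this output pattern. -/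
import Mathlib


/-- Terms in `n` variables over a signature with a single ternary operation symbol. -/
inductive Term3 (n : ℕ) : Type
  | var : Fin n → Term3 n
  | app : Term3 n → Term3 n → Term3 n → Term3 n

/-- Evaluation, interpreting the operation symbol as `t`. -/
def Term3.eval (t : ℕ → ℕ → ℕ → ℕ) {n : ℕ} : Term3 n → (Fin n → ℕ) → ℕ
  | Term3.var v, a => a v
  | Term3.app u₁ u₂ u₃, a => t (u₁.eval t a) (u₂.eval t a) (u₃.eval t a)

/-- Subterm relation. -/
inductive Term3.IsSubterm {n : ℕ} : Term3 n → Term3 n → Prop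
  | refl (r : Term3 n) : Term3.IsSubterm r r
  | app₁ {u r₁ r₂ r₃ : Term3 n} : Term3.IsSubterm u r₁ → Term3.IsSubterm u (Term3.app r₁ r₂ r₃)
  | app₂ {u r₁ r₂ r₃ : Term3 n} : Term3.IsSubterm u r₂ → Term3.IsSubterm u (Term3.app r₁ r₂ r₃)
  | app₃ {u r₁ r₂ r₃ : Term3 n} : Term3.IsSubterm u r₃ → Term3.IsSubterm u (Term3.app r₁ r₂ r₃)

/-- `cube₀(x,y)`: the square whose rows are constant `x` and `y`. -/
def cube₀ (x y : ℕ) : Fin 2 → Fin 2 → ℕ := fun r _ => if r = 0 then x else y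

/-- `cube₁(x,y)`: the square whose columns are constant `x` and `y`. -/
def cube₁ (x y : ℕ) : Fin 2 → Fin 2 → ℕ := fun _ c => if c = 0 then x else y

/-- Generators of `M(1,1)`. -/
def Gens : Set (Fin 2 → Fin 2 → ℕ) :=
  {q | ∃ x y, q = cube₀ x y ∨ q = cube₁ x y}

/-- Coordinatewise evaluation of a term on squares. -/
def evalSq (t : ℕ → ℕ → ℕ → ℕ) {n : ℕ} (r : Term3 n) (a : Fin n → Fin 2 → Fin 2 → ℕ) :
    Fin 2 → Fin 2 → ℕ :=
  fun i j => r.eval t (fun v => a v i j)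

theorem stmt_10 (s : ℕ → ℕ → ℕ → ℕ)
    (hinj : Function.Injective (fun p : ℕ × ℕ × ℕ => s p.1 p.2.1 p.2.2))
    (hrange : ∀ x y z, s x y z ∉ ({0, 1, 2, 3} : Set ℕ))
    (t : ℕ → ℕ → ℕ → ℕ)
    (ht1 : t 0 0 0 = 3) (ht2 : t 1 2 0 = 3)
    (ht3 : ∀ x y z, (x, y, z) ≠ ((0 : ℕ), (0 : ℕ), (0 : ℕ)) →
      (x, y, z) ≠ ((1 : ℕ), (2 : ℕ), (0 : ℕ)) → t x y z = s x y z)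
    (n : ℕ) (r : Term3 n) (a : Fin n → Fin 2 → Fin 2 → ℕ)
    (hgen : ∀ v, a v ∈ Gens)
    (hconst : evalSq t r a 0 0 = evalSq t r a 0 1)
    (hnonconst : evalSq t r a 1 0 ≠ evalSq t r a 1 1) :
    ∃ u v w : Fin n, u ≠ v ∧ u ≠ w ∧ v ≠ w ∧
      Term3.IsSubterm (Term3.app (Term3.var u) (Term3.var v) (Term3.var w)) r := by
  -- t never outputs 0, 1, or 2
  have tlarge : ∀ x y z : ℕ, 3 ≤ t x y z := by
    intro x y z
    by_cases h1 : x = 0 ∧ y = 0 ∧ z = 0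
    · obtain ⟨rfl, rfl, rfl⟩ := h1; omega
    by_cases h2 : x = 1 ∧ y = 2 ∧ z = 0
    · obtain ⟨rfl, rfl, rfl⟩ := h2; omega
    rw [ht3 x y z (by simp [Prod.ext_iff]; tauto) (by simp [Prod.ext_iff]; tauto)]
    have := hrange x y z
    simp [Set.mem_insert_iff] at this
    omega
  -- collisions of t are exactly the designed one
  have tcoll : ∀ x y z x' y' z' : ℕ, t x y z = t x' y' z' →
      (x = x' ∧ y = y' ∧ z = z') ∨
      (x = 0 ∧ y = 0 ∧ z = 0 ∧ x' = 1 ∧ y' = 2 ∧ z' = 0) ∨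
      (x = 1 ∧ y = 2 ∧ z = 0 ∧ x' = 0 ∧ y' = 0 ∧ z' = 0) := by
    intro x y z x' y' z' h
    by_cases h1 : x = 0 ∧ y = 0 ∧ z = 0 <;>
    by_cases h2 : x = 1 ∧ y = 2 ∧ z = 0 <;>
    by_cases h1' : x' = 0 ∧ y' = 0 ∧ z' = 0 <;>
    by_cases h2' : x' = 1 ∧ y' = 2 ∧ z' = 0
    all_goals try (exfalso; omega)
    all_goals try (left; omega)
    all_goals try (right; left; omega)
    all_goals try (right; right; omega)
    -- remaining: at least one side non-special
    · -- x special(000), x' non-special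
      obtain ⟨rfl, rfl, rfl⟩ := h1
      rw [ht1, ht3 x' y' z' (by simp [Prod.ext_iff]; tauto) (by simp [Prod.ext_iff]; tauto)] at h
      have := hrange x' y' z'; simp [Set.mem_insert_iff] at this; omega
    · obtain ⟨rfl, rfl, rfl⟩ := h2
      rw [ht2, ht3 x' y' z' (by simp [Prod.ext_iff]; tauto) (by simp [Prod.ext_iff]; tauto)] at h
      have := hrange x' y' z'; simp [Set.mem_insert_iff] at this; omega
    · obtain ⟨rfl, rfl, rfl⟩ := h1'
      rw [ht1, ht3 x y z (by simp [Prod.ext_iff]; tauto) (by simp [Prod.ext_iff]; tauto)] at h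
      have := hrange x y z; simp [Set.mem_insert_iff] at this; omega
    · obtain ⟨rfl, rfl, rfl⟩ := h2'
      rw [ht2, ht3 x y z (by simp [Prod.ext_iff]; tauto) (by simp [Prod.ext_iff]; tauto)] at h
      have := hrange x y z; simp [Set.mem_insert_iff] at this; omega
    · -- both non-special
      rw [ht3 x y z (by simp [Prod.ext_iff]; tauto) (by simp [Prod.ext_iff]; tauto),
        ht3 x' y' z' (by simp [Prod.ext_iff]; tauto) (by simp [Prod.ext_iff]; tauto)] at h
      have := hinj (a₁ := (x, y, z)) (a₂ := (x', y', z')) h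
      left
      simpa [Prod.ext_iff] using this
  -- small values come from variables
  have hvar : ∀ (q : Term3 n) (env : Fin n → ℕ), q.eval t env < 3 → ∃ v, q = Term3.var v := by
    intro q env hq
    cases q with
    | var v => exact ⟨v, rfl⟩
    | app s₁ s₂ s₃ =>
      exfalso
      have := tlarge (s₁.eval t env) (s₂.eval t env) (s₃.eval t env)
      simp only [Term3.eval] at hq
      omega
  simp only [evalSq] at hconst hnonconst
  suffices h : (Term3.eval t r (fun v => a v 0 0) = Term3.eval t r (fun v => a v 0 1) →
      Term3.eval t r (fun v => a v 1 0) = Term3.eval t r (fun v => a v 1 1)) ∨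
      (∃ u v w : Fin n, u ≠ v ∧ u ≠ w ∧ v ≠ w ∧
        Term3.IsSubterm (Term3.app (Term3.var u) (Term3.var v) (Term3.var w)) r) by
    rcases h with h | h
    · exact absurd (h hconst) hnonconst
    · exact h
  clear hconst hnonconst
  induction r with
  | var v =>
    left
    intro h
    obtain ⟨x, y, hc | hc⟩ := hgen v <;>
      simp only [Term3.eval, hc, cube₀, cube₁] at h ⊢ <;>
      simp_all [show (1 : Fin 2) ≠ 0 by decide]
  | app r₁ r₂ r₃ ih₁ ih₂ ih₃ =>
    rcases ih₂ with ih₂ | ⟨u, v, w, h1, h2, h3, hs⟩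
    swap
    · exact Or.inr ⟨u, v, w, h1, h2, h3, Term3.IsSubterm.app₂ hs⟩
    rcases ih₃ with ih₃ | ⟨u, v, w, h1, h2, h3, hs⟩
    swap
    · exact Or.inr ⟨u, v, w, h1, h2, h3, Term3.IsSubterm.app₃ hs⟩
    rcases ih₁ with ih₁ | ⟨u, v, w, h1, h2, h3, hs⟩
    swap
    · exact Or.inr ⟨u, v, w, h1, h2, h3, Term3.IsSubterm.app₁ hs⟩
    by_cases h : Term3.eval t (Term3.app r₁ r₂ r₃) (fun v => a v 0 0) =
        Term3.eval t (Term3.app r₁ r₂ r₃) (fun v => a v 0 1)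
    swap
    · exact Or.inl (fun hh => absurd hh h)
    simp only [Term3.eval] at h
    rcases tcoll _ _ _ _ _ _ h with ⟨e1, e2, e3⟩ | hcol | hcol
    · left
      intro _
      simp only [Term3.eval]
      rw [ih₁ e1, ih₂ e2, ih₃ e3]
    · obtain ⟨a1, a2, a3, b1, b2, b3⟩ := hcol
      obtain ⟨u, hu⟩ := hvar r₁ (fun v => a v 0 0) (by omega)
      obtain ⟨v, hv⟩ := hvar r₂ (fun v => a v 0 0) (by omega)
      obtain ⟨w, hw⟩ := hvar r₃ (fun v => a v 0 0) (by omega)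
      subst hu; subst hv; subst hw
      simp only [Term3.eval] at a1 a2 a3 b1 b2 b3
      right
      refine ⟨u, v, w, ?_, ?_, ?_, Term3.IsSubterm.refl _⟩
      · rintro rfl; omega
      · rintro rfl; omega
      · rintro rfl; omega
    · obtain ⟨a1, a2, a3, b1, b2, b3⟩ := hcol
      obtain ⟨u, hu⟩ := hvar r₁ (fun v => a v 0 0) (by omega)
      obtain ⟨v, hv⟩ := hvar r₂ (fun v => a v 0 0) (by omega)
      obtain ⟨w, hw⟩ := hvar r₃ (fun v => a v 0 0) (by omega)
      subst hu; subst hv; subst hw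
      simp only [Term3.eval] at a1 a2 a3 b1 b2 b3
      right
      refine ⟨u, v, w, ?_, ?_, ?_, Term3.IsSubterm.refl _⟩
      · rintro rfl; omega
      · rintro rfl; omega
      · rintro rfl; omega
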